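/- arXiv:1912.12185 — 3 statements merged into one kernel-verified Lean document; each statement's English description precedes it below -/
import Mathlib

section
/- Let H ∈ M_d(ℂ) be Hermitian, L_1,…,L_k ∈ M_d(ℂ) and γ_l ≥ 0, and let ℒ be the Lindbladian. Suppose S ∈ M_d(ℂ) is a unitary strong symmetry, i.e. [H,S] = 0 and [L_l,S] = 0 for all l, and suppose S has exactly n_s distinct eigenvalues. Then the dimension of the kernel of ℒ is at least n_s. -/
open Matrix

/-- The Lindbladian `ℒ(ρ) = -i[H,ρ] + Σ_l γ_l (2 L_l ρ L_l† - L_l†L_l ρ - ρ L_l†L_l)`. -/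
noncomputable def lindbladian {n : Type*} [Fintype n] {ι : Type*} [Fintype ι]
    (H : Matrix n n ℂ) (γ : ι → ℝ) (L : ι → Matrix n n ℂ) :
    Matrix n n ℂ →ₗ[ℂ] Matrix n n ℂ :=
  (-Complex.I) • (LinearMap.mulLeft ℂ H - LinearMap.mulRight ℂ H) +
    ∑ l : ι, (γ l : ℂ) •
      ((2 : ℂ) • (LinearMap.mulRight ℂ (L l)ᴴ ∘ₗ LinearMap.mulLeft ℂ (L l))
        - LinearMap.mulLeft ℂ ((L l)ᴴ * L l) - LinearMap.mulRight ℂ ((L l)ᴴ * L l))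

/-- The adjoint (Heisenberg-picture) Lindbladian
`ℒ†(O) = i[H,O] + Σ_l γ_l (2 L_l† O L_l - L_l†L_l O - O L_l†L_l)`. -/
noncomputable def adjLindbladian {n : Type*} [Fintype n] {ι : Type*} [Fintype ι]
    (H : Matrix n n ℂ) (γ : ι → ℝ) (L : ι → Matrix n n ℂ) :
    Matrix n n ℂ →ₗ[ℂ] Matrix n n ℂ :=
  Complex.I • (LinearMap.mulLeft ℂ H - LinearMap.mulRight ℂ H) +
    ∑ l : ι, (γ l : ℂ) •
      ((2 : ℂ) • (LinearMap.mulRight ℂ (L l) ∘ₗ LinearMap.mulLeft ℂ (L l)ᴴ)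
        - LinearMap.mulLeft ℂ ((L l)ᴴ * L l) - LinearMap.mulRight ℂ ((L l)ᴴ * L l))

/-! Since `S` commutes with `H` and the `L_l`, and being unitary also with the `L_l†`, both
`X ↦ S X` and `X ↦ X S` commute with `ℒ`. Hence for every eigenvalue `μ` of `S` the space of
`X` with `S X = X S = μ X` is `ℒ`-invariant. It contains `v v†` for an eigenvector `v` (by
unitarity `v†` is a left eigenvector for the same `μ`), and `tr (v v†) ≠ 0`, whereas `ℒ` takes
values in trace-zero matrices. So `ℒ` is not onto this finite-dimensional space and therefore has
a nonzero kernel vector in it. Kernel vectors for distinct `μ` are eigenvectors of `X ↦ S X` for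
distinct eigenvalues, hence linearly independent. -/

theorem Commute.star_left_of_mem_unitary {R : Type*} [Monoid R] [StarMul R] {a u : R}
    (hu : u ∈ unitary R) (h : Commute a u) : Commute (star a) u :=
  -- `star u` is the inverse of `u` in the unit group
  commute_star_comm.mpr (h.units_inv_right (u := Unitary.toUnits ⟨u, hu⟩))

theorem LinearMap.exists_ne_zero_mem_ker_of_mapsTo {K V : Type*} [Field K] [AddCommGroup V]
    [Module K V] [FiniteDimensional K V] (f : V →ₗ[K] V) {W : Submodule K V}
    (hW : ∀ x ∈ W, f x ∈ W) {x : V} (hxW : x ∈ W) (hx : x ∉ LinearMap.range f) :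
    ∃ y ∈ W, y ≠ 0 ∧ f y = 0 := by
  have hnot : ¬ Function.Injective (f.restrict hW) := fun hinj => by
    obtain ⟨y, hy⟩ := (LinearMap.injective_iff_surjective.mp hinj) ⟨x, hxW⟩
    exact hx ⟨y, congrArg Subtype.val hy⟩
  rw [← LinearMap.ker_eq_bot, ← ne_eq, Submodule.ne_bot_iff] at hnot
  obtain ⟨y, hy, hy0⟩ := hnot
  exact ⟨y, y.2, by simpa using hy0, congrArg Subtype.val hy⟩

theorem Module.End.ncard_le_finrank_of_hasEigenvector {K V : Type*} [Field K] [AddCommGroup V]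
    [Module K V] (g : Module.End K V) (W : Submodule K V) [FiniteDimensional K W] (s : Set K)
    (hs : ∀ μ ∈ s, ∃ v ∈ W, g.HasEigenvector μ v) : s.ncard ≤ Module.finrank K W := by
  rcases s.finite_or_infinite with hfin | hinf
  · have := hfin.fintype
    choose v hvW hv using hs
    have hli : LinearIndependent K (fun μ : s => (⟨v μ μ.2, hvW μ μ.2⟩ : W)) :=
      LinearIndependent.of_comp W.subtype
        (g.eigenvectors_linearIndependent s _ fun μ => hv μ μ.2)
    rw [Set.ncard_eq_toFinset_card', Set.toFinset_card]
    exact hli.fintype_card_le_finrank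
  · simp [hinf.ncard]

def twoSidedEigenspace {R A : Type*} [CommRing R] [Ring A] [Algebra R A] (a : A) (μ : R) :
    Submodule R A :=
  Module.End.eigenspace (LinearMap.mulLeft R a) μ ⊓ Module.End.eigenspace (LinearMap.mulRight R a) μ

theorem mem_twoSidedEigenspace {R A : Type*} [CommRing R] [Ring A] [Algebra R A] {a x : A}
    {μ : R} : x ∈ twoSidedEigenspace a μ ↔ a * x = μ • x ∧ x * a = μ • x := by
  simp [twoSidedEigenspace]

namespace Matrix

theorem exists_mulVec_eq_smul_of_mem_spectrum {K n : Type*} [Field K] [Fintype n]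
    [DecidableEq n] {A : Matrix n n K} {μ : K} (hμ : μ ∈ spectrum K A) :
    ∃ v ≠ 0, A *ᵥ v = μ • v := by
  rw [← spectrum_toLin', ← Module.End.hasEigenvalue_iff_mem_spectrum] at hμ
  obtain ⟨v, hv⟩ := hμ.exists_hasEigenvector
  exact ⟨v, hv.2, by simpa using hv.apply_eq_smul⟩

variable {n : Type*} [Fintype n] [DecidableEq n] {S : Matrix n n ℂ}

open scoped Matrix.Norms.L2Operator in
theorem norm_eq_one_of_mem_spectrum_of_mem_unitary (hS : S ∈ unitary (Matrix n n ℂ)) {μ : ℂ}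
    (hμ : μ ∈ spectrum ℂ S) : ‖μ‖ = 1 :=
  spectrum.norm_eq_one_of_unitary hS hμ

theorem star_vecMul_eq_smul_of_mulVec_eq_smul (hS : S ∈ unitary (Matrix n n ℂ)) {μ : ℂ}
    (hμ : ‖μ‖ = 1) {v : n → ℂ} (hv : S *ᵥ v = μ • v) : star v ᵥ* S = μ • star v := by
  have hμ' : star μ * μ = 1 := by
    rw [Complex.star_def, Complex.conj_mul', hμ]
    norm_num
  have hSv : Sᴴ *ᵥ v = star μ • v :=
    calc Sᴴ *ᵥ v = Sᴴ *ᵥ ((star μ * μ) • v) := by rw [hμ', one_smul]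
      _ = star μ • ((Sᴴ * S) *ᵥ v) := by simp only [← mulVec_mulVec, hv, mul_smul, mulVec_smul]
      _ = star μ • v := by rw [← star_eq_conjTranspose, Unitary.star_mul_self_of_mem hS, one_mulVec]
  rw [← conjTranspose_conjTranspose S, ← star_mulVec, hSv, star_smul, star_star]

open scoped ComplexOrder in
theorem exists_trace_ne_zero_mem_twoSidedEigenspace (hS : S ∈ unitary (Matrix n n ℂ)) {μ : ℂ}
    (hμ : μ ∈ spectrum ℂ S) : ∃ X ∈ twoSidedEigenspace S μ, X.trace ≠ 0 := by
  obtain ⟨v, hv0, hv⟩ := exists_mulVec_eq_smul_of_mem_spectrum hμ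
  refine ⟨vecMulVec v (star v), mem_twoSidedEigenspace.mpr ⟨?_, ?_⟩, ?_⟩
  · rw [mul_vecMulVec, hv, smul_vecMulVec]
  · rw [vecMulVec_mul, star_vecMul_eq_smul_of_mulVec_eq_smul hS
      (norm_eq_one_of_mem_spectrum_of_mem_unitary hS hμ) hv, vecMulVec_smul]
  · rw [trace_vecMulVec]
    exact dotProduct_self_star_eq_zero.not.mpr hv0

end Matrix

section Lindbladian

variable {n ι : Type*} [Fintype n] [Fintype ι] (H : Matrix n n ℂ) (γ : ι → ℝ)
  (L : ι → Matrix n n ℂ)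

theorem lindbladian_apply (X : Matrix n n ℂ) :
    lindbladian H γ L X = (-Complex.I) • (H * X - X * H) +
      ∑ l, (γ l : ℂ) • ((2 : ℂ) • (L l * X * (L l)ᴴ) - (L l)ᴴ * L l * X - X * ((L l)ᴴ * L l)) := by
  simp [lindbladian, mul_assoc]

theorem trace_lindbladian (X : Matrix n n ℂ) : (lindbladian H γ L X).trace = 0 := by
  rw [lindbladian_apply, trace_add, trace_smul, trace_sub, trace_mul_comm H X, sub_self, smul_zero,
    zero_add, trace_sum]
  refine Finset.sum_eq_zero fun l _ => ?_
  rw [trace_smul, trace_sub, trace_sub, trace_smul, trace_mul_cycle, trace_mul_comm X]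
  simp only [smul_eq_mul]
  ring

variable {S : Matrix n n ℂ} (hH : Commute H S) (hL : ∀ l, Commute (L l) S)
  (hLstar : ∀ l, Commute (L l)ᴴ S)
include hH hL hLstar

theorem lindbladian_mul_left (X : Matrix n n ℂ) :
    lindbladian H γ L (S * X) = S * lindbladian H γ L X := by
  simp only [lindbladian_apply, mul_add, mul_sub, Finset.mul_sum, mul_smul_comm, mul_assoc,
    hH.left_comm, fun l => (hL l).left_comm, fun l => (hLstar l).left_comm]

theorem lindbladian_mul_right (X : Matrix n n ℂ) :
    lindbladian H γ L (X * S) = lindbladian H γ L X * S := by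
  simp only [lindbladian_apply, add_mul, sub_mul, Finset.sum_mul, smul_mul_assoc, ← mul_assoc,
    hH.symm.right_comm, fun l => (hL l).symm.right_comm, fun l => (hLstar l).symm.right_comm]

theorem lindbladian_mem_twoSidedEigenspace [DecidableEq n] {μ : ℂ} {X : Matrix n n ℂ}
    (hX : X ∈ twoSidedEigenspace S μ) : lindbladian H γ L X ∈ twoSidedEigenspace S μ := by
  obtain ⟨hSX, hXS⟩ := mem_twoSidedEigenspace.mp hX
  refine mem_twoSidedEigenspace.mpr ⟨?_, ?_⟩
  · rw [← lindbladian_mul_left H γ L hH hL hLstar, hSX, map_smul]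
  · rw [← lindbladian_mul_right H γ L hH hL hLstar, hXS, map_smul]

end Lindbladian

theorem ncard_spectrum_le_finrank_ker_lindbladian_general {d k : ℕ}
    (H : Matrix (Fin d) (Fin d) ℂ)
    (γ : Fin k → ℝ)
    (L : Fin k → Matrix (Fin d) (Fin d) ℂ)
    (S : Matrix (Fin d) (Fin d) ℂ)
    (hS : Sᴴ * S = 1) (hS' : S * Sᴴ = 1)
    (hSH : H * S = S * H)
    (hSL : ∀ l, L l * S = S * L l)
    (ns : ℕ) (hns : (spectrum ℂ S).ncard = ns) :
    ns ≤ Module.finrank ℂ (LinearMap.ker (lindbladian H γ L)) := by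
  have hU : S ∈ unitary (Matrix (Fin d) (Fin d) ℂ) := Unitary.mem_iff.mpr ⟨hS, hS'⟩
  have hSLstar : ∀ l, Commute (L l)ᴴ S := fun l => Commute.star_left_of_mem_unitary hU (hSL l)
  subst hns
  refine Module.End.ncard_le_finrank_of_hasEigenvector (LinearMap.mulLeft ℂ S) _ _ fun μ hμ => ?_
  obtain ⟨X, hXμ, hX⟩ := exists_trace_ne_zero_mem_twoSidedEigenspace hU hμ
  obtain ⟨ρ, hρμ, hρ0, hρ⟩ := (lindbladian H γ L).exists_ne_zero_mem_ker_of_mapsTo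
    (fun _ => lindbladian_mem_twoSidedEigenspace H γ L hSH hSL hSLstar) hXμ
    (fun ⟨Y, hY⟩ => hX (hY ▸ trace_lindbladian H γ L Y))
  exact ⟨ρ, hρ, (Submodule.mem_inf.mp hρμ).1, hρ0⟩

/-- if `S` is a unitary strong symmetry with exactly `ns` distinct
eigenvalues, then the kernel of `ℒ` has dimension at least `ns`. -/
theorem ncard_spectrum_le_finrank_ker_lindbladian {d k : ℕ}
    (H : Matrix (Fin d) (Fin d) ℂ) (hH : H.IsHermitian)
    (γ : Fin k → ℝ) (hγ : ∀ l, 0 ≤ γ l)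
    (L : Fin k → Matrix (Fin d) (Fin d) ℂ)
    (S : Matrix (Fin d) (Fin d) ℂ)
    (hS : Sᴴ * S = 1) (hS' : S * Sᴴ = 1)
    (hSH : H * S = S * H)
    (hSL : ∀ l, L l * S = S * L l)
    (ns : ℕ) (hns : (spectrum ℂ S).ncard = ns) :
    ns ≤ Module.finrank ℂ (LinearMap.ker (lindbladian H γ L)) :=
  ncard_spectrum_le_finrank_ker_lindbladian_general H γ L S hS hS' hSH hSL ns hns
end

section
/- Consider the fully-connected quantum network on ℂ^{N+1} with orthonormal basis |0⟩,|1⟩,…,|N⟩ and Hamiltonian H = ε_g|0⟩⟨0| + ε Σ_{i=1}^N |i⟩⟨i| + h Σ_{1 ≤ i ≠ j ≤ N} |i⟩⟨j| (ε_g, ε, h real). Let B ⊆ {1,…,N} be the set of bath sites, with jump operators L_a^+ = μ_a^+ |a⟩⟨0| and L_a^- = μ_a^- |0⟩⟨a| for a ∈ B. For any two sites i, j ∈ {1,…,N} \ B with i ≠ j, the exchange operator P_{ij} = I − |i⟩⟨i| − |j⟩⟨j| + |i⟩⟨j| + |j⟩⟨i| commutes with H and with every jump operator L_a^± (a ∈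 B), i.e. P_{ij} is a strong symmetry of the network Liouvillian. -/
open Matrix

/-- The fully-connected network Hamiltonian
`H = ε_g|0⟩⟨0| + ε Σ_{i≥1} |i⟩⟨i| + h Σ_{1 ≤ i ≠ j ≤ N} |i⟩⟨j|` on `ℂ^{N+1}`. -/
noncomputable def networkH (N : ℕ) (εg ε h : ℝ) :
    Matrix (Fin (N + 1)) (Fin (N + 1)) ℂ :=
  (εg : ℂ) • Matrix.single 0 0 1
    + (ε : ℂ) • ∑ i ∈ Finset.univ.filter (fun i : Fin (N + 1) => i ≠ 0),
        Matrix.single i i 1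
    + (h : ℂ) • ∑ i ∈ Finset.univ.filter (fun i : Fin (N + 1) => i ≠ 0),
        ∑ j ∈ Finset.univ.filter (fun j : Fin (N + 1) => j ≠ 0 ∧ j ≠ i),
          Matrix.single i j 1

/-- The absorption jump operator `L_a^+ = μ_a^+ |a⟩⟨0|`. -/
noncomputable def networkLplus (N : ℕ) (μ : ℂ) (a : Fin (N + 1)) :
    Matrix (Fin (N + 1)) (Fin (N + 1)) ℂ :=
  μ • Matrix.single a 0 1

/-- The emission jump operator `L_a^- = μ_a^- |0⟩⟨a|`. -/
noncomputable def networkLminus (N : ℕ) (μ : ℂ) (a : Fin (N + 1)) :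
    Matrix (Fin (N + 1)) (Fin (N + 1)) ℂ :=
  μ • Matrix.single 0 a 1

/-- The exchange operator `P_{ij} = I - |i⟩⟨i| - |j⟩⟨j| + |i⟩⟨j| + |j⟩⟨i|`. -/
noncomputable def exchangeOp (N : ℕ) (i j : Fin (N + 1)) :
    Matrix (Fin (N + 1)) (Fin (N + 1)) ℂ :=
  1 - Matrix.single i i 1 - Matrix.single j j 1
    + Matrix.single i j 1 + Matrix.single j i 1

/-!
`P_{ij}` is the permutation matrix of the transposition `σ = (i j)`, and a matrix commutes with a
permutation matrix as soon as relabelling its rows and columns by `σ` leaves it unchanged. Since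
`i, j ≠ 0`, `σ` fixes the ground site and permutes the remaining sites among themselves, which
leaves `H` invariant; since `i, j ∉ B`, it also fixes every bath site `a`, so it leaves
`|a⟩⟨0|`, `|0⟩⟨a|` and hence all jump operators and their adjoints invariant.
-/

namespace Matrix

theorem submatrix_sum {ι l m n o R : Type*} [AddCommMonoid R] (s : Finset ι)
    (f : ι → Matrix m n R) (r : l → m) (c : o → n) :
    (∑ i ∈ s, f i).submatrix r c = ∑ i ∈ s, (f i).submatrix r c := by
  ext
  simp [sum_apply]

variable {n R : Type*} [DecidableEq n]

theorem submatrix_single_of_apply_eq [Zero R] {σ : Equiv.Perm n} {a b : n}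
    (ha : σ a = a) (hb : σ b = b) (r : R) :
    (single a b r).submatrix σ σ = single a b r := by
  rw [submatrix_single_equiv, σ.symm_apply_eq.2 ha.symm, σ.symm_apply_eq.2 hb.symm]

theorem commute_permMatrix_of_submatrix_eq [Fintype n] [NonAssocSemiring R]
    {σ : Equiv.Perm n} {M : Matrix n n R} (hM : M.submatrix σ σ = M) :
    Commute (σ.permMatrix R) M := by
  rw [Commute, SemiconjBy, PEquiv.toMatrix_toPEquiv_mul, PEquiv.mul_toMatrix_toPEquiv]
  nth_rw 2 [← hM]
  simp

end Matrix

open Matrix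

theorem exchangeOp_eq_swap (N : ℕ) (i j : Fin (N + 1)) :
    exchangeOp N i j = Matrix.swap ℂ i j := by
  ext x y
  simp only [exchangeOp, Matrix.swap, PEquiv.toMatrix_apply, Equiv.toPEquiv_apply,
    Option.mem_def, Option.some.injEq, Matrix.sub_apply, Matrix.add_apply, one_apply,
    single_apply, Equiv.swap_apply_def]
  grind

theorem networkH_submatrix_of_apply_zero (N : ℕ) (εg ε h : ℝ) {σ : Equiv.Perm (Fin (N + 1))}
    (hσ : σ 0 = 0) : (networkH N εg ε h).submatrix σ σ = networkH N εg ε h := by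
  have symm_eq_zero : ∀ x, σ.symm x = 0 ↔ x = 0 := fun x => by rw [σ.symm_apply_eq, hσ, eq_comm]
  have hdiag : ∑ i with i ≠ 0, single (σ.symm i) (σ.symm i) (1 : ℂ) =
      ∑ i with i ≠ 0, single i i 1 :=
    Finset.sum_equiv σ.symm (by simp [symm_eq_zero]) (by simp)
  have hoff : ∑ i with i ≠ 0, ∑ j with j ≠ 0 ∧ j ≠ i, single (σ.symm i) (σ.symm j) (1 : ℂ) =
      ∑ i with i ≠ 0, ∑ j with j ≠ 0 ∧ j ≠ i, single i j 1 :=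
    Finset.sum_equiv σ.symm (by simp [symm_eq_zero]) fun i _ =>
      Finset.sum_equiv σ.symm (by simp [symm_eq_zero]) (by simp)
  simp only [networkH, submatrix_add, submatrix_smul, Pi.add_apply, Pi.smul_apply,
    submatrix_sum]
  rw [submatrix_single_of_apply_eq hσ hσ]
  simp only [submatrix_single_equiv]
  rw [hdiag, hoff]

theorem exchangeOp_strong_symmetry_general (N : ℕ) (εg ε h : ℝ)
    (B : Finset (Fin (N + 1)))
    (μp μm : Fin (N + 1) → ℂ)
    (i j : Fin (N + 1)) (hi0 : i ≠ 0) (hj0 : j ≠ 0)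
    (hiB : i ∉ B) (hjB : j ∉ B) :
    exchangeOp N i j * networkH N εg ε h = networkH N εg ε h * exchangeOp N i j ∧
      ∀ a ∈ B,
        exchangeOp N i j * networkLplus N (μp a) a
            = networkLplus N (μp a) a * exchangeOp N i j ∧
        exchangeOp N i j * networkLminus N (μm a) a
            = networkLminus N (μm a) a * exchangeOp N i j ∧
        exchangeOp N i j * (networkLplus N (μp a) a)ᴴ
            = (networkLplus N (μp a) a)ᴴ * exchangeOp N i j ∧
        exchangeOp N i j * (networkLminus N (μm a) a)ᴴ
            = (networkLminus N (μm a) a)ᴴ * exchangeOp N i j := by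
  have swap_zero : Equiv.swap i j 0 = 0 := Equiv.swap_apply_of_ne_of_ne hi0.symm hj0.symm
  have commute_of_invariant {M : Matrix (Fin (N + 1)) (Fin (N + 1)) ℂ}
      (hM : M.submatrix (Equiv.swap i j) (Equiv.swap i j) = M) :
      exchangeOp N i j * M = M * exchangeOp N i j := by
    rw [exchangeOp_eq_swap]
    exact (commute_permMatrix_of_submatrix_eq hM).eq
  refine ⟨commute_of_invariant (networkH_submatrix_of_apply_zero N εg ε h swap_zero),
    fun a ha => ?_⟩
  have swap_a : Equiv.swap i j a = a :=
    Equiv.swap_apply_of_ne_of_ne (ne_of_mem_of_not_mem ha hiB) (ne_of_mem_of_not_mem ha hjB)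
  have hLp : (networkLplus N (μp a) a).submatrix (Equiv.swap i j) (Equiv.swap i j) =
      networkLplus N (μp a) a := by
    simp only [networkLplus, submatrix_smul, Pi.smul_apply,
      submatrix_single_of_apply_eq swap_a swap_zero]
  have hLm : (networkLminus N (μm a) a).submatrix (Equiv.swap i j) (Equiv.swap i j) =
      networkLminus N (μm a) a := by
    simp only [networkLminus, submatrix_smul, Pi.smul_apply,
      submatrix_single_of_apply_eq swap_zero swap_a]
  refine ⟨commute_of_invariant hLp, commute_of_invariant hLm, commute_of_invariant ?_,
    commute_of_invariant ?_⟩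
  · rw [← conjTranspose_submatrix, hLp]
  · rw [← conjTranspose_submatrix, hLm]

/-- for sites `i ≠ j` not coupled to the baths, the exchange
operator `P_{ij}` commutes with `H` and with every jump operator `L_a^±`
(and their adjoints), i.e. it is a strong symmetry of the network Liouvillian. -/
theorem exchangeOp_strong_symmetry (N : ℕ) (εg ε h : ℝ)
    (B : Finset (Fin (N + 1))) (hB : (0 : Fin (N + 1)) ∉ B)
    (μp μm : Fin (N + 1) → ℂ)
    (i j : Fin (N + 1)) (hi0 : i ≠ 0) (hj0 : j ≠ 0) (hij : i ≠ j)
    (hiB : i ∉ B) (hjB : j ∉ B) :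
    exchangeOp N i j * networkH N εg ε h = networkH N εg ε h * exchangeOp N i j ∧
      ∀ a ∈ B,
        exchangeOp N i j * networkLplus N (μp a) a
            = networkLplus N (μp a) a * exchangeOp N i j ∧
        exchangeOp N i j * networkLminus N (μm a) a
            = networkLminus N (μm a) a * exchangeOp N i j ∧
        exchangeOp N i j * (networkLplus N (μp a) a)ᴴ
            = (networkLplus N (μp a) a)ᴴ * exchangeOp N i j ∧
        exchangeOp N i j * (networkLminus N (μm a) a)ᴴ
            = (networkLminus N (μm a) a)ᴴ * exchangeOp N i j :=
  exchangeOp_strong_symmetry_general N εg ε h B μp μm i j hi0 hj0 hiB hjB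
end

section
/- Consider the fully-connected quantum network on ℂ^{N+1} with Hamiltonian H = ε_g|0⟩⟨0| + ε Σ_{i=1}^N |i⟩⟨i| + h Σ_{1 ≤ i ≠ j ≤ N} |i⟩⟨j| and jump operators L_a^+ = μ_a^+ |a⟩⟨0|, L_a^- = μ_a^- |0⟩⟨a| for bath sites a ∈ B ⊆ {1,…,N}, with rates γ_a^± ≥ 0. Let n = N − |B| be the number of sites not coupled to the baths and assume n ≥ 1. Then the dimension of the kernel of the Lindbladian ℒ is at least (n−1)² + 1. -/
open Matrix

/-! The adjoint `ℒ†` is the transpose of `ℒ` for the bilinear pairing `(A, X) ↦ tr (A X)`, so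
`dim ker ℒ = dim ker ℒ†`. Call a site free if it is neither `0` nor a bath site, and fix a free
site `s₀`. For free `s`, the vector `|s⟩ - |s₀⟩` vanishes at `0` and at the bath sites, so every
jump operator and its adjoint annihilate it, and it is an eigenvector of `H` with eigenvalue
`ε - h`, because the hopping term only sees the sum of its entries. Hence the `(n - 1)²` matrices
`(|s⟩ - |s₀⟩)(⟨t| - ⟨s₀|)`, with `s, t ≠ s₀` free, lie in `ker ℒ†`, as does the identity; their
entries at `(s, t)` and at `(0, 0)` show that these are independent. -/

section TraceDuality

open Module LinearMap

variable {K n : Type*} [Field K] [Fintype n] [DecidableEq n]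

variable (K n) in
noncomputable def traceDual : Matrix n n K →ₗ[K] Dual K (Matrix n n K) :=
  (LinearMap.mul K (Matrix n n K)).compr₂ (traceLinearMap n K K)

theorem traceDual_injective : Function.Injective (traceDual K n) :=
  fun _ _ h => ext_iff_trace_mul_right.2 (LinearMap.congr_fun h)

theorem traceDual_surjective : Function.Surjective (traceDual K n) :=
  (injective_iff_surjective_of_finrank_eq_finrank Subspace.dual_finrank_eq.symm).1
    traceDual_injective

theorem finrank_ker_eq_of_trace_mul_apply_eq (T T' : Matrix n n K →ₗ[K] Matrix n n K)
    (h : ∀ A X, (A * T X).trace = (T' A * X).trace) :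
    finrank K (ker T') = finrank K (ker T) := by
  have hcomp : traceDual K n ∘ₗ T' = T.dualMap ∘ₗ traceDual K n := by
    ext A X
    exact (h A X).symm
  have hker : ker T' = ker (T.dualMap ∘ₗ traceDual K n) := by
    rw [← hcomp, ker_comp_of_ker_eq_bot _ (ker_eq_bot.2 traceDual_injective)]
  have hrange : range (T.dualMap ∘ₗ traceDual K n) = range T.dualMap := by
    rw [range_comp, range_eq_top.2 traceDual_surjective, Submodule.map_top]
  have h₁ := finrank_range_add_finrank_ker (T.dualMap ∘ₗ traceDual K n)
  have h₂ := finrank_range_add_finrank_ker T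
  rw [hrange, finrank_range_dualMap_eq_finrank_range] at h₁
  rw [hker]
  omega

end TraceDuality

theorem LinearIndependent.fintype_card_le_finrank_of_forall_mem {K V ι : Type*} [DivisionRing K]
    [AddCommGroup V] [Module K V] [Fintype ι] {v : ι → V} (hv : LinearIndependent K v)
    {p : Submodule K V} [Module.Finite K p] (hp : ∀ i, v i ∈ p) :
    Fintype.card ι ≤ Module.finrank K p :=
  (LinearIndependent.of_comp p.subtype (v := fun i => (⟨v i, hp i⟩ : p)) hv)
    |>.fintype_card_le_finrank

theorem Matrix.single_mulVec_eq_zero {m K : Type*} [Fintype m] [DecidableEq m] [Semiring K]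
    (i j : m) (c : K) {v : m → K} (hv : v j = 0) : single i j c *ᵥ v = 0 := by
  rw [single_mulVec_eq, hv, mul_zero, zero_smul]

theorem Matrix.vecMul_single_eq_zero {m K : Type*} [Fintype m] [DecidableEq m] [Semiring K]
    (i j : m) (c : K) {v : m → K} (hv : v i = 0) : v ᵥ* single i j c = 0 := by
  ext k
  simp [vecMul, dotProduct, single_apply, ite_and, hv]

section Lindblad

variable {n ι : Type*} [Fintype n] [Fintype ι]

theorem trace_mul_lindbladian (H : Matrix n n ℂ) (γ : ι → ℝ) (L : ι → Matrix n n ℂ)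
    (A X : Matrix n n ℂ) :
    (A * lindbladian H γ L X).trace = (adjLindbladian H γ L A * X).trace := by
  have cyc : ∀ Y M : Matrix n n ℂ, (A * (Y * M)).trace = (M * (A * Y)).trace := fun Y M => by
    rw [← Matrix.mul_assoc, Matrix.trace_mul_comm]
  simp only [lindbladian, adjLindbladian, LinearMap.add_apply, LinearMap.smul_apply,
    LinearMap.sub_apply, LinearMap.sum_apply, LinearMap.comp_apply, LinearMap.mulLeft_apply,
    LinearMap.mulRight_apply, mul_add, mul_sub, add_mul, sub_mul,
    Matrix.mul_sum, Matrix.sum_mul, mul_smul_comm, smul_mul_assoc, trace_add, trace_sub,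
    trace_sum, trace_smul, Matrix.mul_assoc, cyc X, smul_eq_mul]
  simp only [← Matrix.mul_assoc (L _) X, cyc (L _ * X)]
  congr 1
  · ring
  · exact Finset.sum_congr rfl fun l _ => by ring

theorem adjLindbladian_one [DecidableEq n] (H : Matrix n n ℂ) (γ : ι → ℝ)
    (L : ι → Matrix n n ℂ) : adjLindbladian H γ L 1 = 0 := by
  simp [adjLindbladian, two_smul]

theorem adjLindbladian_vecMulVec_eq_zero (H : Matrix n n ℂ) (γ : ι → ℝ)
    (L : ι → Matrix n n ℂ) {u w : n → ℂ} (c : ℂ)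
    (hHu : H *ᵥ u = c • u) (hwH : w ᵥ* H = c • w) (hLu : ∀ l, L l *ᵥ u = 0)
    (hLHu : ∀ l, (L l)ᴴ *ᵥ u = 0) (hwLH : ∀ l, w ᵥ* (L l)ᴴ = 0) :
    adjLindbladian H γ L (vecMulVec u w) = 0 := by
  simp only [adjLindbladian, LinearMap.add_apply, LinearMap.smul_apply, LinearMap.sub_apply,
    LinearMap.sum_apply, LinearMap.comp_apply, LinearMap.mulLeft_apply,
    LinearMap.mulRight_apply, ← Matrix.mul_assoc (vecMulVec u w), mul_vecMulVec,
    vecMulVec_mul, ← mulVec_mulVec, hHu, hwH, hLu, hLHu, hwLH, smul_vecMulVec, vecMulVec_smul]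
  simp

end Lindblad

section SiteDifferences

open LinearMap

variable (K : Type*) {m : Type*} [Field K] [DecidableEq m]

def siteDiff (s₀ s : m) : m → K := Pi.single s 1 - Pi.single s₀ 1

variable {K}

theorem siteDiff_apply_of_ne {s₀ x : m} (s : m) (hx : x ≠ s₀) :
    siteDiff K s₀ s x = if x = s then 1 else 0 := by
  simp [siteDiff, Pi.single_apply, hx]

theorem linearIndependent_vecMulVec_siteDiff {T : Finset m} {s₀ : m} (hs₀ : s₀ ∉ T) :
    LinearIndependent K fun p : T × T => vecMulVec (siteDiff K s₀ p.1) (siteDiff K s₀ p.2) := by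
  let entries : Matrix m m K →ₗ[K] (T × T → K) :=
    LinearMap.pi fun q => entryLinearMap K K q.1.1 q.2.1
  refine LinearIndependent.of_comp entries ?_
  convert (Pi.basisFun K (T × T)).linearIndependent using 1
  ext p q
  have hq₁ : q.1.1 ≠ s₀ := ne_of_mem_of_not_mem q.1.2 hs₀
  have hq₂ : q.2.1 ≠ s₀ := ne_of_mem_of_not_mem q.2.2 hs₀
  simp only [Function.comp_apply, entries, LinearMap.pi_apply, entryLinearMap_apply,
    vecMulVec_apply, siteDiff_apply_of_ne _ hq₁, siteDiff_apply_of_ne _ hq₂, Pi.basisFun_apply,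
    Pi.single_apply, Prod.ext_iff, Subtype.ext_iff, ite_zero_mul_ite_zero, one_mul]

theorem one_notMem_span_vecMulVec_siteDiff {T : Finset m} {s₀ z : m} (hz : z ∉ T)
    (hzs₀ : z ≠ s₀) :
    (1 : Matrix m m K) ∉ Submodule.span K
      (Set.range fun p : T × T => vecMulVec (siteDiff K s₀ p.1) (siteDiff K s₀ p.2)) := by
  have hspan : Submodule.span K (Set.range fun p : T × T =>
      vecMulVec (siteDiff K s₀ p.1) (siteDiff K s₀ p.2)) ≤ ker (entryLinearMap K K z z) := by
    refine Submodule.span_le.2 (Set.range_subset_iff.2 fun p => ?_)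
    have hp : z ≠ p.1 := fun h => hz (h ▸ p.1.2)
    simp [vecMulVec_apply, siteDiff_apply_of_ne _ hzs₀, hp]
  exact fun h => by simpa using hspan h

end SiteDifferences

section Network

open Finset

variable {N : ℕ}

theorem networkH_apply (εg ε h : ℝ) (i j : Fin (N + 1)) :
    networkH N εg ε h i j =
      if i = 0 ∨ j = 0 then (if i = j then (εg : ℂ) else 0)
      else if i = j then (ε : ℂ) else h := by
  simp only [networkH, Matrix.add_apply, Matrix.smul_apply, Matrix.sum_apply, single_apply,
    ite_and, sum_ite_irrel, sum_const_zero, sum_ite_eq', mem_filter, mem_univ, true_and]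
  by_cases hi : i = 0 <;> by_cases hj : j = 0 <;> by_cases hij : i = j <;> simp_all [eq_comm]

theorem networkH_mulVec (εg ε h : ℝ) {v : Fin (N + 1) → ℂ} (hv₀ : v 0 = 0)
    (hv : ∑ i, v i = 0) : networkH N εg ε h *ᵥ v = ((ε : ℂ) - h) • v := by
  ext i
  rcases eq_or_ne i 0 with rfl | hi
  · simp [mulVec, dotProduct, networkH_apply, hv₀]
  · have hrow : ∀ j, networkH N εg ε h i j * v j
        = h * v j + (if i = j then (ε - h) * v j else 0) - (if j = 0 then h * v j else 0) := by
      intro j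
      rcases eq_or_ne j 0 with rfl | hj
      · simp [networkH_apply, hi, hv₀]
      · by_cases hij : i = j <;> simp [networkH_apply, hi, hj, hij]
        ring
    simp only [mulVec, dotProduct, hrow, sum_sub_distrib, sum_add_distrib, ← mul_sum, hv,
      sum_ite_eq, sum_ite_eq', mem_univ, if_true, hv₀, Pi.smul_apply, smul_eq_mul]
    ring

theorem networkH_transpose (εg ε h : ℝ) : (networkH N εg ε h)ᵀ = networkH N εg ε h := by
  ext i j
  simp only [transpose_apply, networkH_apply, or_comm, eq_comm]

theorem vecMul_networkH (εg ε h : ℝ) {v : Fin (N + 1) → ℂ} (hv₀ : v 0 = 0)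
    (hv : ∑ i, v i = 0) : v ᵥ* networkH N εg ε h = ((ε : ℂ) - h) • v := by
  rw [← networkH_transpose, vecMul_transpose, networkH_mulVec εg ε h hv₀ hv]

structure IsDarkVector (B : Finset (Fin (N + 1))) (v : Fin (N + 1) → ℂ) : Prop where
  apply_zero : v 0 = 0
  apply_of_mem : ∀ a ∈ B, v a = 0
  sum_eq_zero : ∑ i, v i = 0

theorem isDarkVector_siteDiff {B : Finset (Fin (N + 1))} {s₀ s : Fin (N + 1)}
    (hs₀ : s₀ ∉ insert 0 B) (hs : s ∉ insert 0 B) : IsDarkVector B (siteDiff ℂ s₀ s) := by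
  rw [mem_insert, not_or] at hs₀ hs
  refine ⟨?_, fun a ha => ?_, ?_⟩
  · simp [siteDiff, Ne.symm hs₀.1, Ne.symm hs.1]
  · simp [siteDiff, ne_of_mem_of_not_mem ha hs₀.2, ne_of_mem_of_not_mem ha hs.2]
  · simp [siteDiff, sum_sub_distrib]

noncomputable def networkJumps (N : ℕ) (B : Finset (Fin (N + 1))) (μp μm : Fin (N + 1) → ℂ) :
    ↥B × Bool → Matrix (Fin (N + 1)) (Fin (N + 1)) ℂ := fun p =>
  if p.2 then networkLplus N (μp p.1) p.1 else networkLminus N (μm p.1) p.1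

theorem adjLindbladian_network_vecMulVec_eq_zero (εg ε h : ℝ) {B : Finset (Fin (N + 1))}
    (μp μm : Fin (N + 1) → ℂ) (γ : ↥B × Bool → ℝ) {u w : Fin (N + 1) → ℂ}
    (hu : IsDarkVector B u) (hw : IsDarkVector B w) :
    adjLindbladian (networkH N εg ε h) γ (networkJumps N B μp μm) (vecMulVec u w) = 0 := by
  refine adjLindbladian_vecMulVec_eq_zero _ _ _ ((ε : ℂ) - h)
    (networkH_mulVec εg ε h hu.apply_zero hu.sum_eq_zero)
    (vecMul_networkH εg ε h hw.apply_zero hw.sum_eq_zero) ?_ ?_ ?_ <;>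
  rintro ⟨⟨a, ha⟩, _ | _⟩ <;>
  simp [networkJumps, networkLplus, networkLminus, single_mulVec_eq_zero,
    vecMul_single_eq_zero, hu.apply_zero, hu.apply_of_mem a ha, hw.apply_zero,
    hw.apply_of_mem a ha]

theorem card_sq_add_one_le_finrank_ker_adjLindbladian_network (εg ε h : ℝ)
    {B : Finset (Fin (N + 1))} (μp μm : Fin (N + 1) → ℂ) (γ : ↥B × Bool → ℝ)
    {s₀ : Fin (N + 1)} {T : Finset (Fin (N + 1))} (hs₀ : s₀ ∉ insert 0 B)
    (hT : ∀ x ∈ T, x ∉ insert 0 B) (hs₀T : s₀ ∉ T) :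
    T.card ^ 2 + 1 ≤ Module.finrank ℂ
      (LinearMap.ker (adjLindbladian (networkH N εg ε h) γ (networkJumps N B μp μm))) := by
  let v : Option (T × T) → Matrix (Fin (N + 1)) (Fin (N + 1)) ℂ := fun o =>
    Option.casesOn' o 1 fun p => vecMulVec (siteDiff ℂ s₀ p.1) (siteDiff ℂ s₀ p.2)
  have h0s₀ : (0 : Fin (N + 1)) ≠ s₀ := fun h => hs₀ (h ▸ mem_insert_self 0 B)
  have h0T : (0 : Fin (N + 1)) ∉ T := fun h => hT 0 h (mem_insert_self 0 B)
  have hli : LinearIndependent ℂ v :=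
    (linearIndependent_vecMulVec_siteDiff hs₀T).option
      (one_notMem_span_vecMulVec_siteDiff h0T h0s₀)
  have hker : ∀ o, v o ∈ LinearMap.ker
      (adjLindbladian (networkH N εg ε h) γ (networkJumps N B μp μm)) := by
    rintro (_ | ⟨s, t⟩)
    · exact adjLindbladian_one _ _ _
    · exact adjLindbladian_network_vecMulVec_eq_zero εg ε h μp μm γ
        (isDarkVector_siteDiff hs₀ (hT s s.2)) (isDarkVector_siteDiff hs₀ (hT t t.2))
  simpa [sq] using hli.fintype_card_le_finrank_of_forall_mem hker

end Network

theorem network_ker_lindbladian_lower_bound_general (N : ℕ) (εg ε h : ℝ)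
    (B : Finset (Fin (N + 1)))
    (μp μm : Fin (N + 1) → ℂ) (γp γm : Fin (N + 1) → ℝ)
    (hn : 1 ≤ N - B.card) :
    (N - B.card - 1) ^ 2 + 1 ≤
      Module.finrank ℂ (LinearMap.ker (lindbladian (networkH N εg ε h)
        (fun p : ↥B × Bool => if p.2 then γp p.1 else γm p.1)
        (fun p : ↥B × Bool =>
          if p.2 then networkLplus N (μp p.1) p.1
          else networkLminus N (μm p.1) p.1))) := by
  rw [← finrank_ker_eq_of_trace_mul_apply_eq _ _ (trace_mul_lindbladian _ _ _)]
  set S := (insert 0 B)ᶜ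
  have hS : N - B.card ≤ S.card := by
    rw [Finset.card_compl, Fintype.card_fin]
    have := Finset.card_insert_le 0 B
    omega
  obtain ⟨s₀, hs₀⟩ : S.Nonempty := Finset.card_pos.1 (by omega)
  have hT : N - B.card - 1 ≤ (S.erase s₀).card := by
    rw [Finset.card_erase_of_mem hs₀]
    omega
  refine le_trans (by gcongr) (card_sq_add_one_le_finrank_ker_adjLindbladian_network
    εg ε h μp μm _ (Finset.mem_compl.1 hs₀)
    (fun x hx => Finset.mem_compl.1 (Finset.mem_of_mem_erase hx)) (Finset.notMem_erase s₀ S))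

/-- for the fully-connected network with bath sites `B`
(`0 ∉ B`), with `n = N - |B| ≥ 1` sites uncoupled from the baths, the kernel
of the Lindbladian has dimension at least `(n-1)² + 1`. -/
theorem network_ker_lindbladian_lower_bound (N : ℕ) (εg ε h : ℝ)
    (B : Finset (Fin (N + 1))) (hB : (0 : Fin (N + 1)) ∉ B)
    (μp μm : Fin (N + 1) → ℂ) (γp γm : Fin (N + 1) → ℝ)
    (hγp : ∀ a, 0 ≤ γp a) (hγm : ∀ a, 0 ≤ γm a)
    (hn : 1 ≤ N - B.card) :
    (N - B.card - 1) ^ 2 + 1 ≤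
      Module.finrank ℂ (LinearMap.ker (lindbladian (networkH N εg ε h)
        (fun p : ↥B × Bool => if p.2 then γp p.1 else γm p.1)
        (fun p : ↥B × Bool =>
          if p.2 then networkLplus N (μp p.1) p.1
          else networkLminus N (μm p.1) p.1))) :=
  network_ker_lindbladian_lower_bound_general N εg ε h B μp μm γp γm hn
end
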